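/- For k ≥ 2 and γ > 1 with D = (log γk)/(log γ), there exist constants c₁, c₂ > 0 such that c₁ r^D ≤ #B(r) ≤ c₂ r^D for all r ≥ 1, where B(r) is the ball of radius r about the root of Γ_{k,γ}. -/

import Mathlib

open Classical

noncomputable section

/-- Length ⌊γ^j⌋ of the edges (segments) at generation `j` of the sparse tree. -/
def edgeLen (γ : ℝ) (j : ℕ) : ℕ := ⌊γ ^ j⌋₊

/-- The distance Σ_{j=1}^N ⌊γ^j⌋ from the root to the N-th generation of junctions. -/
def junctionDist (γ : ℝ) (N : ℕ) : ℕ := ∑ j ∈ Finset.Icc 1 N, edgeLen γ j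

/-- A vertex of the sparse tree Γ_{k,γ}: a list of branch choices made at the
junctions already passed, together with a position `t` along the current segment
(the root is `([], 0)`; a vertex with choices `w ≠ []` sits at position
`1 ≤ t ≤ ⌊γ^{|w|}⌋` along the segment of generation `|w|`, the segment's far end
`t = ⌊γ^{|w|}⌋` being the next junction). -/
def SparseVertex (k : ℕ) (γ : ℝ) : Type :=
  {p : List (Fin k) × ℕ //
    (p.1 = [] ∧ p.2 = 0) ∨ (p.1 ≠ [] ∧ 1 ≤ p.2 ∧ p.2 ≤ edgeLen γ p.1.length)}

/-- The root `O` of Γ_{k,γ}. -/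
def sparseRoot (k : ℕ) (γ : ℝ) : SparseVertex k γ := ⟨([], 0), Or.inl ⟨rfl, rfl⟩⟩

/-- A vertex is a junction iff it is the root or lies at the far end of its segment,
i.e. at distance Σ_{j=1}^N ⌊γ^j⌋ from the root for some N. Junctions have k forward
neighbours; all other vertices have one. -/
def isJunction {k : ℕ} {γ : ℝ} (v : SparseVertex k γ) : Prop :=
  (v.val.1 = [] ∧ v.val.2 = 0) ∨ (v.val.1 ≠ [] ∧ v.val.2 = edgeLen γ v.val.1.length)

/-- `u` is a forward neighbour of `v`. -/
def forwardNbr {k : ℕ} {γ : ℝ} (v u : SparseVertex k γ) : Prop :=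
  (¬ isJunction v ∧ u.val.1 = v.val.1 ∧ u.val.2 = v.val.2 + 1) ∨
  (isJunction v ∧ ∃ c : Fin k, u.val.1 = v.val.1 ++ [c] ∧ u.val.2 = 1)

/-- The sparse tree Γ_{k,γ} as a simple graph. -/
def sparseGraph (k : ℕ) (γ : ℝ) : SimpleGraph (SparseVertex k γ) :=
  SimpleGraph.fromRel (fun v u => forwardNbr v u)

/-- Graph distance from the root: |x| = d(x, O). -/
def distToRoot {k : ℕ} {γ : ℝ} (v : SparseVertex k γ) : ℕ :=
  (sparseGraph k γ).dist (sparseRoot k γ) v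

/-! The depth of a vertex along its branch is its graph distance to the root: every edge changes
the depth by one, and every vertex other than the root is a forward neighbour of a vertex of
smaller depth. The segments of generation `n` form `k^n` paths of `⌊γ^n⌋ ≍ γ^n` vertices each,
about `(γk)^n` vertices in all. If `r` lies between the depths of the junctions ending generations
`n` and `n + 1`, then `r ≍ γ^n`, and `B(r)` contains generation `n` and lies inside the generations
`≤ n + 1`; hence `#B(r) ≍ (γk)^n = (γ^n)^D ≍ r^D`. -/

theorem StrictMono.exists_le_lt_succ {f : ℕ → ℕ} (hf : StrictMono f) {r : ℕ} (hr : f 0 ≤ r) :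
    ∃ n, f n ≤ r ∧ r < f (n + 1) := by
  have hex : ∃ m, r < f m := ⟨r + 1, Nat.lt_of_lt_of_le (Nat.lt_succ_self r) (hf.id_le _)⟩
  have hpos : Nat.find hex ≠ 0 := fun h => by
    have := Nat.find_spec hex
    rw [h] at this
    omega
  refine ⟨Nat.find hex - 1, not_lt.1 (Nat.find_min hex (by omega)), ?_⟩
  rw [Nat.sub_add_cancel (Nat.one_le_iff_ne_zero.2 hpos)]
  exact Nat.find_spec hex

theorem geom_sum_le_pow_div_sub_one {α : Type*} [Field α] [LinearOrder α] [IsStrictOrderedRing α]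
    {x : α} (hx : 1 < x) (n : ℕ) : ∑ i ∈ Finset.range n, x ^ i ≤ x ^ n / (x - 1) := by
  rw [geom_sum_eq hx.ne']
  exact div_le_div_of_nonneg_right (by linarith) (sub_pos.2 hx).le

theorem pow_rpow_log_div_log {a b : ℝ} (ha : 1 < a) (hb : 0 < b) (n : ℕ) :
    (a ^ n) ^ (Real.log b / Real.log a) = b ^ n := by
  rw [← Real.rpow_pow_comm (by linarith), ← Real.logb, Real.rpow_logb (by linarith) ha.ne' hb]

section Lengths

variable {γ : ℝ}

theorem junctionDist_zero (γ : ℝ) : junctionDist γ 0 = 0 := by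
  simp [junctionDist]

theorem junctionDist_succ (γ : ℝ) (n : ℕ) :
    junctionDist γ (n + 1) = junctionDist γ n + edgeLen γ (n + 1) :=
  Finset.sum_Icc_succ_top (by omega) _

theorem one_le_edgeLen (hγ : 1 ≤ γ) (j : ℕ) : 1 ≤ edgeLen γ j :=
  Nat.le_floor (by simpa using one_le_pow₀ hγ)

theorem edgeLen_le (hγ : 0 ≤ γ) (j : ℕ) : (edgeLen γ j : ℝ) ≤ γ ^ j :=
  Nat.floor_le (pow_nonneg hγ j)

theorem pow_lt_edgeLen_add_one (γ : ℝ) (j : ℕ) : γ ^ j < edgeLen γ j + 1 :=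
  Nat.lt_floor_add_one _

theorem pow_div_two_le_edgeLen (hγ : 1 ≤ γ) (j : ℕ) : γ ^ j / 2 ≤ edgeLen γ j := by
  have := pow_lt_edgeLen_add_one γ j
  have : (1 : ℝ) ≤ edgeLen γ j := by exact_mod_cast one_le_edgeLen hγ j
  linarith

theorem strictMono_junctionDist (hγ : 1 ≤ γ) : StrictMono (junctionDist γ) :=
  strictMono_nat_of_lt_succ fun n => by
    rw [junctionDist_succ]
    have := one_le_edgeLen hγ (n + 1)
    omega

theorem junctionDist_le (hγ : 1 < γ) (N : ℕ) : (junctionDist γ N : ℝ) ≤ γ ^ (N + 1) / (γ - 1) :=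
  calc (junctionDist γ N : ℝ) ≤ ∑ j ∈ Finset.Icc 1 N, γ ^ j := by
        rw [junctionDist, Nat.cast_sum]
        exact Finset.sum_le_sum fun j _ => edgeLen_le (by linarith) j
    _ ≤ ∑ j ∈ Finset.range (N + 1), γ ^ j :=
        Finset.sum_le_sum_of_subset_of_nonneg (fun j hj => by simp at hj ⊢; omega)
          fun j _ _ => by positivity
    _ ≤ γ ^ (N + 1) / (γ - 1) := geom_sum_le_pow_div_sub_one hγ _

theorem pow_le_junctionDist_add_one (γ : ℝ) (N : ℕ) : γ ^ N ≤ junctionDist γ N + 1 := by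
  cases N with
  | zero => simp [junctionDist_zero]
  | succ n =>
    have := pow_lt_edgeLen_add_one γ (n + 1)
    rw [junctionDist_succ, Nat.cast_add]
    linarith [(junctionDist γ n).cast_nonneg (α := ℝ)]

theorem pow_le_two_mul_of_junctionDist_le {n r : ℕ} (h : junctionDist γ n ≤ r) (hr : 1 ≤ r) :
    γ ^ n ≤ 2 * r := by
  have := pow_le_junctionDist_add_one γ n
  have : (junctionDist γ n : ℝ) ≤ r := by exact_mod_cast h
  have : (1 : ℝ) ≤ r := by exact_mod_cast hr
  linarith

end Lengths

namespace SparseVertex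

variable {k : ℕ} {γ : ℝ}

/-- The formula also covers the root, since `0 - 1 = 0` in `ℕ`. -/
def height (v : SparseVertex k γ) : ℕ :=
  junctionDist γ (v.val.1.length - 1) + v.val.2

@[simp]
theorem height_sparseRoot : height (sparseRoot k γ) = 0 := by
  simp [height, sparseRoot, junctionDist_zero]

theorem eq_sparseRoot_of_fst_eq_nil :
    ∀ {v : SparseVertex k γ}, v.val.1 = [] → v = sparseRoot k γ
  | ⟨_, Or.inl ⟨hw, ht⟩⟩, _ => Subtype.ext (Prod.ext hw ht)
  | ⟨_, Or.inr ⟨hw, _⟩⟩, h => absurd h hw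

theorem height_eq_of_forwardNbr {v u : SparseVertex k γ} (h : forwardNbr v u) :
    height u = height v + 1 := by
  rcases h with ⟨-, hw, ht⟩ | ⟨⟨hw, ht⟩ | ⟨hw, ht⟩, c, huw, hut⟩
  · simp only [height, hw, ht]
    omega
  · simp [height, huw, hut, hw, ht, junctionDist_zero]
  · obtain ⟨n, hn⟩ := Nat.exists_eq_succ_of_ne_zero (List.length_pos_iff.2 hw).ne'
    simp [height, huw, hut, ht, hn, junctionDist_succ]

theorem sparseGraph_adj_of_forwardNbr {v u : SparseVertex k γ} (h : forwardNbr v u) :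
    (sparseGraph k γ).Adj v u := by
  refine (SimpleGraph.fromRel_adj _ _ _).2 ⟨fun hvu => ?_, Or.inl h⟩
  have := height_eq_of_forwardNbr h
  rw [hvu] at this
  omega

theorem height_le_height_add_length {a b : SparseVertex k γ} (p : (sparseGraph k γ).Walk a b) :
    height b ≤ height a + p.length := by
  induction p with
  | nil => simp
  | cons h _ ih =>
    rw [sparseGraph, SimpleGraph.fromRel_adj] at h
    rcases h.2 with h | h <;> have := height_eq_of_forwardNbr h <;>
      simp only [SimpleGraph.Walk.length_cons] <;> omega

theorem exists_forwardNbr_of_ne_sparseRoot (hγ : 1 ≤ γ) :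
    ∀ {v : SparseVertex k γ}, v ≠ sparseRoot k γ → ∃ u, forwardNbr u v
  | ⟨_, Or.inl ⟨hw, ht⟩⟩, hv => absurd (Subtype.ext (Prod.ext hw ht)) hv
  | ⟨(w, t), Or.inr ⟨hw, ht1, hte⟩⟩, _ => by
    obtain ht | rfl : 2 ≤ t ∨ t = 1 := by omega
    · refine ⟨⟨(w, t - 1), Or.inr ⟨hw, by omega, by simp only at hte ⊢; omega⟩⟩,
        Or.inl ⟨?_, rfl, by simp only; omega⟩⟩
      rintro (⟨hw', -⟩ | ⟨-, ht'⟩)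
      · exact hw hw'
      · simp only at hte ht'
        omega
    · obtain ⟨w', c, rfl⟩ := (List.eq_nil_or_concat' w).resolve_left hw
      by_cases hw' : w' = []
      · subst hw'
        exact ⟨sparseRoot k γ, Or.inr ⟨Or.inl ⟨rfl, rfl⟩, c, rfl, rfl⟩⟩
      · exact ⟨⟨(w', edgeLen γ w'.length), Or.inr ⟨hw', one_le_edgeLen hγ _, le_rfl⟩⟩,
          Or.inr ⟨Or.inr ⟨hw', rfl⟩, c, rfl, rfl⟩⟩

theorem exists_walk_length_eq_height (hγ : 1 ≤ γ) (v : SparseVertex k γ) :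
    ∃ p : (sparseGraph k γ).Walk (sparseRoot k γ) v, p.length = height v := by
  induction hn : height v generalizing v with
  | zero =>
    by_cases hv : v = sparseRoot k γ
    · exact hv ▸ ⟨.nil, rfl⟩
    · obtain ⟨u, hu⟩ := exists_forwardNbr_of_ne_sparseRoot hγ hv
      have := height_eq_of_forwardNbr hu
      omega
  | succ n ih =>
    have hv : v ≠ sparseRoot k γ := by
      rintro rfl
      simp at hn
    obtain ⟨u, hu⟩ := exists_forwardNbr_of_ne_sparseRoot hγ hv
    obtain ⟨p, hp⟩ := ih u (by have := height_eq_of_forwardNbr hu; omega)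
    exact ⟨p.concat (sparseGraph_adj_of_forwardNbr hu), by simp [hp]⟩

theorem distToRoot_eq_height (hγ : 1 ≤ γ) (v : SparseVertex k γ) : distToRoot v = height v := by
  obtain ⟨p, hp⟩ := exists_walk_length_eq_height hγ v
  obtain ⟨q, hq⟩ := (SimpleGraph.Walk.reachable p).exists_walk_length_eq_dist
  have := height_le_height_add_length q
  rw [height_sparseRoot, hq, zero_add] at this
  exact le_antisymm (hp ▸ SimpleGraph.dist_le p) this

/-- `segmentVertex n (w, i)` is the vertex at position `i + 1` on the segment of generation
`n + 1` reached by the branch choices `w`. -/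
def segmentVertex (n : ℕ) (x : List.Vector (Fin k) (n + 1) × Fin (edgeLen γ (n + 1))) :
    SparseVertex k γ :=
  ⟨(x.1.toList, x.2 + 1), Or.inr ⟨List.ne_nil_of_length_pos (by simp), by omega, by simp⟩⟩

theorem segmentVertex_injective (n : ℕ) :
    Function.Injective (segmentVertex (k := k) (γ := γ) n) := by
  rintro ⟨w, i⟩ ⟨w', i'⟩ h
  have h := congrArg Subtype.val h
  simp only [segmentVertex, Prod.mk.injEq, add_left_inj] at h
  exact Prod.ext (List.Vector.toList_injective h.1) (Fin.ext h.2)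

theorem ncard_range_segmentVertex (n : ℕ) :
    (Set.range (segmentVertex (k := k) (γ := γ) n)).ncard = k ^ (n + 1) * edgeLen γ (n + 1) := by
  rw [← Nat.card_coe_set_eq, Nat.card_range_of_injective (segmentVertex_injective n)]
  simp [Nat.card_eq_fintype_card, card_vector]

theorem height_segmentVertex (n : ℕ) (x : List.Vector (Fin k) (n + 1) × Fin (edgeLen γ (n + 1))) :
    height (segmentVertex n x) = junctionDist γ n + (x.2 + 1) := by
  simp [height, segmentVertex]

theorem mem_range_segmentVertex {v : SparseVertex k γ} (hv : v.val.1 ≠ []) :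
    v ∈ Set.range (segmentVertex (v.val.1.length - 1)) := by
  obtain ⟨ht1, hte⟩ := (v.property.resolve_left fun h => hv h.1).2
  have hlen : v.val.1.length = v.val.1.length - 1 + 1 :=
    (Nat.sub_add_cancel (List.length_pos_iff.2 hv)).symm
  exact ⟨(⟨v.val.1, hlen⟩, ⟨v.val.2 - 1, by rw [← hlen]; omega⟩),
    Subtype.ext (Prod.ext rfl (Nat.sub_add_cancel ht1))⟩

def ball (k : ℕ) (γ : ℝ) (r : ℕ) : Set (SparseVertex k γ) :=
  {v | height v ≤ r}

theorem ball_subset_insert_biUnion (hγ : 1 ≤ γ) {r N : ℕ} (h : r < junctionDist γ N) :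
    ball k γ r ⊆
      insert (sparseRoot k γ) (⋃ n ∈ Finset.range N, Set.range (segmentVertex n)) := by
  intro v hv
  by_cases hw : v.val.1 = []
  · exact Or.inl (eq_sparseRoot_of_fst_eq_nil hw)
  · refine Or.inr (Set.mem_biUnion (Finset.mem_range.2 ?_) (mem_range_segmentVertex hw))
    rw [← (strictMono_junctionDist hγ).lt_iff_lt]
    have ht := (v.property.resolve_left fun h => hw h.1).2.1
    simp only [ball, height, Set.mem_ofPred_eq] at hv
    omega

theorem finite_insert_biUnion_segmentVertex (N : ℕ) :
    (insert (sparseRoot k γ) (⋃ n ∈ Finset.range N, Set.range (segmentVertex n))).Finite :=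
  .insert _ (.biUnion (Finset.range N).finite_toSet fun _ _ => Set.finite_range _)

theorem finite_ball (hγ : 1 ≤ γ) (r : ℕ) : (ball k γ r).Finite :=
  (finite_insert_biUnion_segmentVertex (r + 1)).subset
    (ball_subset_insert_biUnion hγ ((strictMono_junctionDist hγ).id_le (r + 1)))

theorem ncard_ball_le (hγ : 1 ≤ γ) {r N : ℕ} (h : r < junctionDist γ N) :
    (ball k γ r).ncard ≤ 1 + ∑ n ∈ Finset.range N, k ^ (n + 1) * edgeLen γ (n + 1) :=
  calc (ball k γ r).ncard
      ≤ (insert (sparseRoot k γ) (⋃ n ∈ Finset.range N, Set.range (segmentVertex n))).ncard :=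
        Set.ncard_le_ncard (ball_subset_insert_biUnion hγ h) (finite_insert_biUnion_segmentVertex N)
    _ ≤ (⋃ n ∈ Finset.range N, Set.range (segmentVertex (k := k) (γ := γ) n)).ncard + 1 :=
        Set.ncard_insert_le _ _
    _ ≤ (∑ n ∈ Finset.range N, k ^ (n + 1) * edgeLen γ (n + 1)) + 1 := by
        grw [Finset.set_ncard_biUnion_le]
        simp [ncard_range_segmentVertex]
    _ = _ := add_comm _ _

theorem pow_mul_edgeLen_le_ncard_ball (hγ : 1 ≤ γ) {r n : ℕ} (h : junctionDist γ n ≤ r) :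
    k ^ n * edgeLen γ n ≤ (ball k γ r).ncard := by
  cases n with
  | zero =>
    have : sparseRoot k γ ∈ ball k γ r := by simp [ball]
    rw [pow_zero, one_mul, edgeLen, pow_zero, Nat.floor_one]
    exact (Set.ncard_pos (finite_ball hγ r)).2 ⟨_, this⟩
  | succ n =>
    rw [← ncard_range_segmentVertex]
    refine Set.ncard_le_ncard ?_ (finite_ball hγ r)
    rintro _ ⟨x, rfl⟩
    have := x.2.isLt
    simp only [ball, Set.mem_ofPred_eq, height_segmentVertex]
    rw [junctionDist_succ] at h
    omega

theorem ncard_ball_le_pow_div (hγ : 1 < γ) (hk : 1 ≤ k) {r N : ℕ} (h : r < junctionDist γ N) :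
    ((ball k γ r).ncard : ℝ) ≤ (γ * k) ^ (N + 1) / (γ * k - 1) :=
  calc ((ball k γ r).ncard : ℝ)
      ≤ 1 + ∑ n ∈ Finset.range N, (k : ℝ) ^ (n + 1) * edgeLen γ (n + 1) := by
        exact_mod_cast ncard_ball_le hγ.le h
    _ ≤ 1 + ∑ n ∈ Finset.range N, (γ * k) ^ (n + 1) := by
        gcongr with n
        rw [mul_pow, mul_comm]
        exact mul_le_mul_of_nonneg_right (edgeLen_le (by linarith) _) (by positivity)
    _ = ∑ n ∈ Finset.range (N + 1), (γ * k) ^ n := by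
        rw [Finset.sum_range_succ', pow_zero, add_comm]
    _ ≤ (γ * k) ^ (N + 1) / (γ * k - 1) :=
        geom_sum_le_pow_div_sub_one (one_lt_mul_of_lt_of_le hγ (by exact_mod_cast hk)) _

theorem pow_div_two_le_ncard_ball (hγ : 1 ≤ γ) {r n : ℕ} (h : junctionDist γ n ≤ r) :
    (γ * k) ^ n / 2 ≤ (ball k γ r).ncard :=
  calc (γ * k) ^ n / 2 = (k : ℝ) ^ n * (γ ^ n / 2) := by ring
    _ ≤ (k : ℝ) ^ n * edgeLen γ n := by gcongr; exact pow_div_two_le_edgeLen hγ n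
    _ ≤ (ball k γ r).ncard := by exact_mod_cast pow_mul_edgeLen_le_ncard_ball hγ h

end SparseVertex

open SparseVertex in
/-- For k ≥ 2, γ > 1 and D = log(γk)/log γ, there are constants
c₁, c₂ > 0 with c₁ r^D ≤ #B(r) ≤ c₂ r^D for all r ≥ 1. -/
theorem sparse_tree_ball_growth (k : ℕ) (γ : ℝ) (hk : 2 ≤ k) (hγ : 1 < γ)
    (D : ℝ) (hD : D = Real.log (γ * k) / Real.log γ) :
    ∃ c₁ c₂ : ℝ, 0 < c₁ ∧ 0 < c₂ ∧ ∀ r : ℕ, 1 ≤ r →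
      c₁ * (r : ℝ) ^ D ≤ ({v : SparseVertex k γ | distToRoot v ≤ r}.ncard : ℝ) ∧
      ({v : SparseVertex k γ | distToRoot v ≤ r}.ncard : ℝ) ≤ c₂ * (r : ℝ) ^ D := by
  have hγk : 1 < γ * k := one_lt_mul_of_lt_of_le hγ (by exact_mod_cast (by omega : 1 ≤ k))
  have hD0 : 0 ≤ D := hD ▸ div_nonneg (Real.log_nonneg hγk.le) (Real.log_nonneg hγ.le)
  have hpow (n : ℕ) : (γ ^ n) ^ D = (γ * k) ^ n := hD ▸ pow_rpow_log_div_log hγ (by linarith) n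
  refine ⟨(γ - 1) ^ D / (2 * (γ * k) ^ 2), (γ * k) ^ 2 * 2 ^ D / (γ * k - 1),
    by have := sub_pos.2 hγ; positivity, by have := sub_pos.2 hγk; positivity, fun r hr => ?_⟩
  obtain ⟨n, hn, hn'⟩ :=
    (strictMono_junctionDist hγ.le).exists_le_lt_succ (junctionDist_zero γ ▸ r.zero_le)
  have hr_le : (r : ℝ) ^ D ≤ (γ * k) ^ (n + 2) / (γ - 1) ^ D := by
    rw [← hpow, ← Real.div_rpow (by positivity) (by linarith)]
    exact Real.rpow_le_rpow (Nat.cast_nonneg r)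
      ((Nat.cast_lt.2 hn').le.trans (junctionDist_le hγ _)) hD0
  have hr_ge : (γ * k) ^ n ≤ 2 ^ D * (r : ℝ) ^ D := by
    rw [← hpow, ← Real.mul_rpow zero_le_two (Nat.cast_nonneg r)]
    exact Real.rpow_le_rpow (by positivity) (pow_le_two_mul_of_junctionDist_le hn hr) hD0
  simp only [distToRoot_eq_height hγ.le]
  constructor
  · calc (γ - 1) ^ D / (2 * (γ * k) ^ 2) * (r : ℝ) ^ D
        ≤ (γ - 1) ^ D / (2 * (γ * k) ^ 2) * ((γ * k) ^ (n + 2) / (γ - 1) ^ D) := by gcongr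
      _ = (γ * k) ^ n / 2 := by
        field_simp [(Real.rpow_pos_of_pos (sub_pos.2 hγ) D).ne']
        ring
      _ ≤ _ := pow_div_two_le_ncard_ball hγ.le hn
  · calc _ ≤ (γ * k) ^ (n + 1 + 1) / (γ * k - 1) := ncard_ball_le_pow_div hγ (by omega) hn'
      _ = (γ * k) ^ 2 / (γ * k - 1) * (γ * k) ^ n := by ring
      _ ≤ (γ * k) ^ 2 / (γ * k - 1) * (2 ^ D * (r : ℝ) ^ D) := by
        have := sub_pos.2 hγk
        gcongr
      _ = _ := by ring

end
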